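/- arXiv:1705.03381 — 13 statements merged into one kernel-verified Lean document; each statement's English description precedes it below -/
import Mathlib

section
/- Let a₁, a₂, a₃ be real numbers with 0 < a₁ < 1, 0 < a₂ < 1, 0 < a₃ < 1. Then there exists exactly one triple (x₁, x₂, x₃) with 0 < x₁ < 1, 0 < x₂ < 1, 0 < x₃ < 1 satisfying x₁ = a₁(1 − x₂)(1 − x₃), x₂ = a₂(1 − x₁)(1 − x₃), and x₃ = a₃(1 − x₁)(1 − x₂). -/
/-!
With `u = 1 - x₁`, the last two equations are linear in `x₂, x₃` with determinant
`1 - a₂ a₃ u² > 0`; eliminating `x₂, x₃` turns the first equation into `reducedPoly a₁ a₂ a₃ u = 0`.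
This polynomial is positive at `0` and negative at `1`, so it has a root in `(0, 1)`. At every such
root its derivative is negative, and a continuous function that crosses zero only downwards
crosses it at most once.
-/

open Set Filter Topology

theorem eventually_neg_and_pos_of_deriv_neg {f : ℝ → ℝ} {x : ℝ} (hf : deriv f x < 0)
    (hx : f x = 0) : (∀ᶠ y in 𝓝[>] x, f y < 0) ∧ ∀ᶠ y in 𝓝[<] x, 0 < f y := by
  have hsign := eventually_nhdsWithin_sign_eq_of_deriv_neg hf hx
  constructor
  · filter_upwards [nhdsWithin_le_nhds hsign, self_mem_nhdsWithin] with y hy (hxy : x < y)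
    rwa [sign_neg (sub_neg.2 hxy), sign_eq_neg_one_iff] at hy
  · filter_upwards [nhdsWithin_le_nhds hsign, self_mem_nhdsWithin] with y hy (hxy : y < x)
    rwa [sign_pos (sub_pos.2 hxy), sign_eq_one_iff] at hy

theorem Set.OrdConnected.subsingleton_zeros_of_deriv_neg {f : ℝ → ℝ} {s : Set ℝ}
    (hs : s.OrdConnected) (hf : ContinuousOn f s)
    (hd : ∀ x ∈ s, f x = 0 → deriv f x < 0) :
    {x ∈ s | f x = 0}.Subsingleton := by
  intro u hu v hv
  wlog huv : u ≤ v generalizing u v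
  · exact (this hv hu (le_of_not_ge huv)).symm
  by_contra hne
  have hsub : Icc u v ⊆ s := hs.out hu.1 hv.1
  -- continuous induction: `f` cannot become positive, since it turns negative at each zero
  have hnonpos : Icc u v ⊆ {x | f x ≤ 0} := by
    refine IsClosed.Icc_subset_of_forall_mem_nhdsWithin ?_ hu.2.le ?_
    · rw [inter_comm]
      exact (hf.mono hsub).preimage_isClosed_of_isClosed isClosed_Icc isClosed_Iic
    rintro x ⟨hx, hxI⟩
    rcases (show f x ≤ 0 from hx).lt_or_eq with hneg | hzero
    · have hcont := (hf x (hsub (Ico_subset_Icc_self hxI))).mono_of_mem_nhdsWithin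
        (mem_of_superset (Icc_mem_nhdsGT_of_mem hxI) hsub)
      exact hcont.eventually_le_const hneg
    · have hderiv := hd x (hsub (Ico_subset_Icc_self hxI)) hzero
      exact (eventually_neg_and_pos_of_deriv_neg hderiv hzero).1.mono fun y hy => hy.le
  obtain ⟨y, hy, hyI⟩ := ((eventually_neg_and_pos_of_deriv_neg (hd v hv.1 hv.2) hv.2).2.and
    (Ioo_mem_nhdsLT (lt_of_le_of_ne huv hne))).exists
  exact (hnonpos (Ioo_subset_Icc_self hyI)).not_gt hy

theorem one_sub_mul_sq_lt_of_lt {s t u : ℝ} (hs : 0 < s) (ht : 0 < t) (hsu : s < u) (htu : t < u)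
    (hu : u < 1) (h : (1 - u) * (1 - s * t) ^ 2 < (1 - s) * (1 - t)) :
    (1 - u) * (1 - s * t) ^ 2 < (1 - s) * (1 - t) * (1 - s * t + 4 * (1 - u) * (s * t)) := by
  wlog hts : t ≤ s generalizing s t
  · have := this ht hs htu hsu (by linarith [mul_comm s t]) (le_of_not_ge hts)
    convert this using 1 <;> ring
  have hst : 0 < s * t := mul_pos hs ht
  have hm : 0 < (1 - s) * (1 - t) := mul_pos (by linarith) (by linarith)
  have hq : 0 < 1 - s * t := by nlinarith
  -- Both sides are affine in `1 - u`. Depending on the sign of `(1 - st)² - 4(1 - s)(1 - t)`,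
  -- either the bound `h` or the bound `1 - u < 1 - s` makes the conclusion hold.
  suffices (1 - u) * ((1 - s * t) ^ 2 - 4 * (s * t) * ((1 - s) * (1 - t)))
      < (1 - s) * (1 - t) * (1 - s * t) by linarith
  rcases le_or_gt ((1 - s * t) ^ 2 - 4 * (s * t) * ((1 - s) * (1 - t))) 0 with hσ | hσ
  · nlinarith [mul_nonpos_of_nonneg_of_nonpos (sub_pos.2 hu).le hσ, mul_pos hm hq]
  rcases le_or_gt ((1 - s * t) ^ 2) (4 * ((1 - s) * (1 - t))) with hqm | hqm
  · nlinarith [mul_lt_mul_of_pos_right h hσ, mul_nonneg (mul_pos hst hm).le (sub_nonneg.2 hqm),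
      pow_pos hq 2]
  · have h4s : 0 < 4 * s - 1 - 3 * s * t := by nlinarith
    nlinarith [mul_lt_mul_of_pos_right (show 1 - u < 1 - s by linarith) hσ,
      mul_nonneg (mul_nonneg ht.le (sq_nonneg (1 - s))) h4s.le]

def reducedPoly (a₁ a₂ a₃ u : ℝ) : ℝ :=
  (1 - u) * (1 - a₂ * a₃ * u ^ 2) ^ 2 - a₁ * ((1 - a₂ * u) * (1 - a₃ * u))

theorem hasDerivAt_reducedPoly (a₁ a₂ a₃ u : ℝ) :
    HasDerivAt (reducedPoly a₁ a₂ a₃)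
      (-(1 - a₂ * a₃ * u ^ 2) ^ 2 - 4 * (1 - u) * (1 - a₂ * a₃ * u ^ 2) * (a₂ * a₃ * u)
        + a₁ * (a₂ * (1 - a₃ * u) + a₃ * (1 - a₂ * u))) u := by
  have hlin (c : ℝ) : HasDerivAt (fun w : ℝ => 1 - c * w) (-c) u := by
    simpa using ((hasDerivAt_id u).const_mul c).const_sub 1
  have hq : HasDerivAt (fun w : ℝ => 1 - a₂ * a₃ * w ^ 2) (-(a₂ * a₃ * (2 * u))) u := by
    simpa using ((hasDerivAt_pow 2 u).const_mul (a₂ * a₃)).const_sub 1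
  have h := (((hasDerivAt_id' u).const_sub 1).mul (hq.pow 2)).sub
    (((hlin a₂).mul (hlin a₃)).const_mul a₁)
  refine HasDerivAt.congr_deriv (f := reducedPoly a₁ a₂ a₃) h ?_
  simp only [Pi.pow_apply]
  push_cast
  ring

def IsSocialModel (a₁ a₂ a₃ : ℝ) (x : ℝ × ℝ × ℝ) : Prop :=
  (0 < x.1 ∧ x.1 < 1) ∧ (0 < x.2.1 ∧ x.2.1 < 1) ∧ (0 < x.2.2 ∧ x.2.2 < 1) ∧
    x.1 = a₁ * (1 - x.2.1) * (1 - x.2.2) ∧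
    x.2.1 = a₂ * (1 - x.1) * (1 - x.2.2) ∧
    x.2.2 = a₃ * (1 - x.1) * (1 - x.2.1)

section

variable {a₁ a₂ a₃ : ℝ}

theorem deriv_reducedPoly_neg (h₁' : a₁ < 1) (h₂ : 0 < a₂) (h₂' : a₂ < 1) (h₃ : 0 < a₃)
    (h₃' : a₃ < 1) {u : ℝ} (hu : u ∈ Ioo (0 : ℝ) 1) (hroot : reducedPoly a₁ a₂ a₃ u = 0) :
    deriv (reducedPoly a₁ a₂ a₃) u < 0 := by
  obtain ⟨hu₀, hu₁⟩ := hu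
  rw [(hasDerivAt_reducedPoly a₁ a₂ a₃ u).deriv]
  have hs : a₂ * u < u := mul_lt_of_lt_one_left hu₀ h₂'
  have ht : a₃ * u < u := mul_lt_of_lt_one_left hu₀ h₃'
  have hq : 0 < 1 - a₂ * a₃ * u ^ 2 := by nlinarith [mul_pos (mul_pos h₂ h₃) hu₀]
  have hm : 0 < (1 - a₂ * u) * (1 - a₃ * u) :=
    mul_pos (sub_pos.2 (hs.trans hu₁)) (sub_pos.2 (ht.trans hu₁))
  have hkey := one_sub_mul_sq_lt_of_lt (mul_pos h₂ hu₀) (mul_pos h₃ hu₀) hs ht hu₁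
    (by rw [reducedPoly] at hroot; nlinarith)
  refine neg_of_mul_neg_right ?_ (mul_pos hu₀ hm).le
  -- at a root, `u (1 - a₂ u)(1 - a₃ u)` times the derivative is `1 - a₂ a₃ u²` times the
  -- difference of the two sides of `hkey`
  rw [reducedPoly] at hroot
  nlinarith [mul_lt_mul_of_pos_left hkey hq,
    congrArg (· * (a₂ * u + a₃ * u - 2 * a₂ * a₃ * u ^ 2)) hroot]

theorem reducedPoly_one_sub_eq_zero {x₁ x₂ x₃ : ℝ} (e₁ : x₁ = a₁ * (1 - x₂) * (1 - x₃))
    (e₂ : x₂ = a₂ * (1 - x₁) * (1 - x₃)) (e₃ : x₃ = a₃ * (1 - x₁) * (1 - x₂)) :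
    reducedPoly a₁ a₂ a₃ (1 - x₁) = 0 := by
  have h₂ : x₂ * (1 - a₂ * a₃ * (1 - x₁) ^ 2) = a₂ * (1 - x₁) * (1 - a₃ * (1 - x₁)) := by
    linear_combination e₂ - a₂ * (1 - x₁) * e₃
  have h₃ : x₃ * (1 - a₂ * a₃ * (1 - x₁) ^ 2) = a₃ * (1 - x₁) * (1 - a₂ * (1 - x₁)) := by
    linear_combination e₃ - a₃ * (1 - x₁) * e₂
  rw [reducedPoly]
  linear_combination (1 - a₂ * a₃ * (1 - x₁) ^ 2) ^ 2 * e₁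
    - a₁ * (1 - a₂ * a₃ * (1 - x₁) ^ 2) * (1 - x₂) * h₃ - a₁ * (1 - a₃ * (1 - x₁)) * h₂

theorem exists_reducedPoly_eq_zero (h₁ : 0 < a₁) (h₁' : a₁ < 1) (h₂' : a₂ < 1) (h₃' : a₃ < 1) :
    ∃ u ∈ Ioo (0 : ℝ) 1, reducedPoly a₁ a₂ a₃ u = 0 := by
  have hcont : ContinuousOn (reducedPoly a₁ a₂ a₃) (Icc 0 1) := by
    unfold reducedPoly; fun_prop
  refine intermediate_value_Ioo' zero_le_one hcont ⟨?_, ?_⟩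
  · have := mul_pos h₁ (mul_pos (sub_pos.2 h₂') (sub_pos.2 h₃'))
    norm_num [reducedPoly]
    linarith
  · norm_num [reducedPoly]
    linarith

theorem subsingleton_reducedPoly_roots (h₁' : a₁ < 1) (h₂ : 0 < a₂) (h₂' : a₂ < 1) (h₃ : 0 < a₃)
    (h₃' : a₃ < 1) : {u ∈ Ioo (0 : ℝ) 1 | reducedPoly a₁ a₂ a₃ u = 0}.Subsingleton :=
  ordConnected_Ioo.subsingleton_zeros_of_deriv_neg
    (by unfold reducedPoly; fun_prop)
    fun _ hu hroot => deriv_reducedPoly_neg h₁' h₂ h₂' h₃ h₃' hu hroot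

theorem isSocialModel_of_reducedPoly_eq_zero (h₂ : 0 < a₂) (h₂' : a₂ < 1) (h₃ : 0 < a₃)
    (h₃' : a₃ < 1) {u : ℝ} (hu : u ∈ Ioo (0 : ℝ) 1) (hroot : reducedPoly a₁ a₂ a₃ u = 0) :
    IsSocialModel a₁ a₂ a₃ (1 - u, a₂ * u * (1 - a₃ * u) / (1 - a₂ * a₃ * u ^ 2),
      a₃ * u * (1 - a₂ * u) / (1 - a₂ * a₃ * u ^ 2)) := by
  obtain ⟨hu₀, hu₁⟩ := hu
  have hs : a₂ * u < 1 := by nlinarith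
  have ht : a₃ * u < 1 := by nlinarith
  have hq : 0 < 1 - a₂ * a₃ * u ^ 2 := by nlinarith [mul_pos (mul_pos h₂ h₃) hu₀]
  have hq' := hq.ne'
  have hx₂ : 1 - a₂ * u * (1 - a₃ * u) / (1 - a₂ * a₃ * u ^ 2)
      = (1 - a₂ * u) / (1 - a₂ * a₃ * u ^ 2) := by
    rw [eq_div_iff hq', sub_mul, div_mul_cancel₀ _ hq']
    ring
  have hx₃ : 1 - a₃ * u * (1 - a₂ * u) / (1 - a₂ * a₃ * u ^ 2)
      = (1 - a₃ * u) / (1 - a₂ * a₃ * u ^ 2) := by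
    rw [eq_div_iff hq', sub_mul, div_mul_cancel₀ _ hq']
    ring
  simp only [IsSocialModel]
  refine ⟨⟨by linarith, by linarith⟩, ⟨by positivity, ?_⟩, ⟨by positivity, ?_⟩, ?_, ?_, ?_⟩
  · rw [div_lt_one hq]; nlinarith
  · rw [div_lt_one hq]; nlinarith
  · rw [hx₂, hx₃, mul_assoc a₁, div_mul_div_comm, mul_div_assoc', eq_div_iff (mul_ne_zero hq' hq')]
    rw [reducedPoly] at hroot
    linear_combination hroot
  · rw [hx₃, sub_sub_cancel, mul_div_assoc']
  · rw [hx₂, sub_sub_cancel, mul_div_assoc']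

theorem eq_and_eq_of_eq_mul_one_sub {b c y₁ y₂ z₁ z₂ : ℝ} (hbc : b * c ≠ 1)
    (hy₁ : y₁ = b * (1 - y₂)) (hy₂ : y₂ = c * (1 - y₁))
    (hz₁ : z₁ = b * (1 - z₂)) (hz₂ : z₂ = c * (1 - z₁)) : y₁ = z₁ ∧ y₂ = z₂ := by
  have h₁ : (1 - b * c) * (y₁ - z₁) = 0 := by linear_combination hy₁ - hz₁ - b * (hy₂ - hz₂)
  have h₁' : y₁ = z₁ :=
    sub_eq_zero.1 ((mul_eq_zero.1 h₁).resolve_left (sub_ne_zero.2 hbc.symm))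
  exact ⟨h₁', by rw [hy₂, hz₂, h₁']⟩

theorem IsSocialModel.eq (h₁' : a₁ < 1) (h₂ : 0 < a₂) (h₂' : a₂ < 1) (h₃ : 0 < a₃) (h₃' : a₃ < 1)
    {x y : ℝ × ℝ × ℝ} (hx : IsSocialModel a₁ a₂ a₃ x) (hy : IsSocialModel a₁ a₂ a₃ y) : x = y := by
  obtain ⟨x₁, x₂, x₃⟩ := x
  obtain ⟨y₁, y₂, y₃⟩ := y
  obtain ⟨⟨hx₁, hx₁'⟩, -, -, ex₁, ex₂, ex₃⟩ := hx
  obtain ⟨⟨hy₁, hy₁'⟩, -, -, ey₁, ey₂, ey₃⟩ := hy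
  have h₁ : 1 - x₁ = 1 - y₁ :=
    subsingleton_reducedPoly_roots h₁' h₂ h₂' h₃ h₃'
      ⟨⟨by linarith, by linarith⟩, reducedPoly_one_sub_eq_zero ex₁ ex₂ ex₃⟩
      ⟨⟨by linarith, by linarith⟩, reducedPoly_one_sub_eq_zero ey₁ ey₂ ey₃⟩
  obtain rfl : x₁ = y₁ := by linarith
  have hb : a₂ * (1 - x₁) < 1 := by nlinarith
  have hc : a₃ * (1 - x₁) < 1 := by nlinarith
  have hbc : a₂ * (1 - x₁) * (a₃ * (1 - x₁)) ≠ 1 :=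
    (mul_lt_one_of_nonneg_of_lt_one_left (by nlinarith) hb hc.le).ne
  obtain ⟨rfl, rfl⟩ := eq_and_eq_of_eq_mul_one_sub hbc ex₂ ex₃ ey₂ ey₃
  rfl

end

theorem three_arg_unique_social_model
    (a₁ a₂ a₃ : ℝ)
    (h₁ : 0 < a₁) (h₁' : a₁ < 1)
    (h₂ : 0 < a₂) (h₂' : a₂ < 1)
    (h₃ : 0 < a₃) (h₃' : a₃ < 1) :
    ∃! x : ℝ × ℝ × ℝ,
      (0 < x.1 ∧ x.1 < 1) ∧ (0 < x.2.1 ∧ x.2.1 < 1) ∧ (0 < x.2.2 ∧ x.2.2 < 1) ∧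
      x.1 = a₁ * (1 - x.2.1) * (1 - x.2.2) ∧
      x.2.1 = a₂ * (1 - x.1) * (1 - x.2.2) ∧
      x.2.2 = a₃ * (1 - x.1) * (1 - x.2.1) := by
  obtain ⟨u, hu, hroot⟩ := exists_reducedPoly_eq_zero h₁ h₁' h₂' h₃'
  have hmodel := isSocialModel_of_reducedPoly_eq_zero h₂ h₂' h₃ h₃' hu hroot
  exact ⟨_, hmodel, fun y hy => IsSocialModel.eq h₁' h₂ h₂' h₃ h₃' hy hmodel⟩
end

section
/- Let a₁, a₂, a₃ be real numbers with 0 < a₃ < a₂ < a₁ < 1, and let (x₁, x₂, x₃) ∈ (0,1)³ satisfy x₁ = a₁(1 − x₂)(1 − x₃), x₂ = a₂(1 − x₁)(1 − x₃), x₃ = a₃(1 − x₁)(1 − x₂). Then |1/2 − x₂| > |1/2 − x₁|. -/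
theorem three_arg_abs_ineq
    (a₁ a₂ a₃ x₁ x₂ x₃ : ℝ)
    (ha₃ : 0 < a₃) (h₃₂ : a₃ < a₂) (h₂₁ : a₂ < a₁) (ha₁ : a₁ < 1)
    (hx₁ : 0 < x₁) (hx₁' : x₁ < 1)
    (hx₂ : 0 < x₂) (hx₂' : x₂ < 1)
    (hx₃ : 0 < x₃) (hx₃' : x₃ < 1)
    (e₁ : x₁ = a₁ * (1 - x₂) * (1 - x₃))
    (e₂ : x₂ = a₂ * (1 - x₁) * (1 - x₃))
    (e₃ : x₃ = a₃ * (1 - x₁) * (1 - x₂)) :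
    |1/2 - x₂| > |1/2 - x₁| := by
  have heq : a₂ * x₁ * (1 - x₁) = a₁ * x₂ * (1 - x₂) := by
    linear_combination (a₂*(1-x₁))*e₁ - (a₁*(1-x₂))*e₂
  have ha₂ : 0 < a₂ := lt_trans ha₃ h₃₂
  have key : (1/2 - x₁)^2 < (1/2 - x₂)^2 := by
    nlinarith [mul_pos hx₁ (by linarith : (0:ℝ) < 1 - x₁),
      mul_pos (mul_pos (by linarith : (0:ℝ) < a₁ - a₂) hx₁) (by linarith : (0:ℝ) < 1 - x₁)]
  exact lt_of_pow_lt_pow_left₀ 2 (abs_nonneg _) (by rwa [sq_abs, sq_abs])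
end

section
/- Let a₁, a₂, a₃ be real numbers with 0 < a₃ < a₂ < a₁ < 1, and let (x₁, x₂, x₃) ∈ (0,1)³ satisfy x₁ = a₁(1 − x₂)(1 − x₃), x₂ = a₂(1 − x₁)(1 − x₃), x₃ = a₃(1 − x₁)(1 − x₂). Then x₂ < 1/2 (and likewise x₃ < 1/2). -/
theorem three_arg_x2_x3_lt_half
    (a₁ a₂ a₃ x₁ x₂ x₃ : ℝ)
    (ha₃ : 0 < a₃) (h₃₂ : a₃ < a₂) (h₂₁ : a₂ < a₁) (ha₁ : a₁ < 1)
    (hx₁ : 0 < x₁) (hx₁' : x₁ < 1)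
    (hx₂ : 0 < x₂) (hx₂' : x₂ < 1)
    (hx₃ : 0 < x₃) (hx₃' : x₃ < 1)
    (e₁ : x₁ = a₁ * (1 - x₂) * (1 - x₃))
    (e₂ : x₂ = a₂ * (1 - x₁) * (1 - x₃))
    (e₃ : x₃ = a₃ * (1 - x₁) * (1 - x₂)) :
    x₂ < 1/2 ∧ x₃ < 1/2 := by
  have hy1 : (0:ℝ) < 1 - x₁ := by linarith
  have hy2 : (0:ℝ) < 1 - x₂ := by linarith
  have hy3 : (0:ℝ) < 1 - x₃ := by linarith
  have ha₂ : 0 < a₂ := lt_trans ha₃ h₃₂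
  have h12 : x₂ < 1 - x₁ := by nlinarith [mul_pos hy1 hy3]
  have h13 : x₃ < 1 - x₁ := by nlinarith [mul_pos hy1 hy2]
  have key2 : x₁ * (a₂ * (1 - x₁)) = x₂ * (a₁ * (1 - x₂)) := by
    linear_combination (a₂ * (1 - x₁)) * e₁ - (a₁ * (1 - x₂)) * e₂
  have key3 : x₁ * (a₃ * (1 - x₁)) = x₃ * (a₁ * (1 - x₃)) := by
    linear_combination (a₃ * (1 - x₁)) * e₁ - (a₁ * (1 - x₃)) * e₃
  have h21 : x₂ < x₁ := by
    by_contra h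
    push_neg at h
    have h2 : x₂ * (1 - x₂) < x₁ * (1 - x₁) := by
      nlinarith [mul_pos hx₁ hy1]
    nlinarith [mul_nonneg (sub_nonneg.2 h) (le_of_lt (show (0:ℝ) < 1 - x₁ - x₂ by linarith))]
  have h31 : x₃ < x₁ := by
    by_contra h
    push_neg at h
    have h2 : x₃ * (1 - x₃) < x₁ * (1 - x₁) := by
      nlinarith [mul_pos hx₁ hy1]
    nlinarith [mul_nonneg (sub_nonneg.2 h) (le_of_lt (show (0:ℝ) < 1 - x₁ - x₃ by linarith))]
  constructor <;> linarith
end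

section
/- Let a₁, a₂, a₃ be real numbers with 0 < a₃ < a₂ < a₁ < 1, and let (x₁, x₂, x₃) ∈ (0,1)³ satisfy x₁ = a₁(1 − x₂)(1 − x₃), x₂ = a₂(1 − x₁)(1 − x₃), x₃ = a₃(1 − x₁)(1 − x₂). Then x₂ = 1/2 − √(1/4 − (a₂/a₁)(1/4 − (1/2 − x₁)²)) and x₃ = 1/2 − √(1/4 − (a₃/a₁)(1/4 − (1/2 − x₁)²)). -/
set_option maxHeartbeats 1000000


theorem three_arg_x2_x3_formula
    (a₁ a₂ a₃ x₁ x₂ x₃ : ℝ)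
    (ha₃ : 0 < a₃) (h₃₂ : a₃ < a₂) (h₂₁ : a₂ < a₁) (ha₁ : a₁ < 1)
    (hx₁ : 0 < x₁) (hx₁' : x₁ < 1)
    (hx₂ : 0 < x₂) (hx₂' : x₂ < 1)
    (hx₃ : 0 < x₃) (hx₃' : x₃ < 1)
    (e₁ : x₁ = a₁ * (1 - x₂) * (1 - x₃))
    (e₂ : x₂ = a₂ * (1 - x₁) * (1 - x₃))
    (e₃ : x₃ = a₃ * (1 - x₁) * (1 - x₂)) :
    x₂ = 1/2 - Real.sqrt (1/4 - (a₂/a₁) * (1/4 - (1/2 - x₁)^2)) ∧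
    x₃ = 1/2 - Real.sqrt (1/4 - (a₃/a₁) * (1/4 - (1/2 - x₁)^2)) := by
  have ha₂ : 0 < a₂ := lt_trans ha₃ h₃₂
  have ha₁0 : 0 < a₁ := lt_trans ha₂ h₂₁
  have h1x₁ : (0:ℝ) < 1 - x₁ := by linarith
  have h1x₂ : (0:ℝ) < 1 - x₂ := by linarith
  have h1x₃ : (0:ℝ) < 1 - x₃ := by linarith
  have h3ne : (1 - x₃) ≠ 0 := ne_of_gt h1x₃
  have h2ne : (1 - x₂) ≠ 0 := ne_of_gt h1x₂
  have ha₁ne : a₁ ≠ 0 := ne_of_gt ha₁0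
  -- key product relations
  have key2 : a₁ * (x₂ * (1 - x₂)) = a₂ * (x₁ * (1 - x₁)) := by
    have h : a₁ * (x₂ * (1 - x₂)) * (1 - x₃) = a₂ * (x₁ * (1 - x₁)) * (1 - x₃) := by
      have h1 : x₂ * x₁ = x₂ * (a₁ * (1 - x₂) * (1 - x₃)) := by rw [← e₁]
      have h2 : x₁ * x₂ = x₁ * (a₂ * (1 - x₁) * (1 - x₃)) := by rw [← e₂]
      nlinarith [h1, h2]
    exact mul_right_cancel₀ h3ne h
  have key3 : a₁ * (x₃ * (1 - x₃)) = a₃ * (x₁ * (1 - x₁)) := by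
    have h : a₁ * (x₃ * (1 - x₃)) * (1 - x₂) = a₃ * (x₁ * (1 - x₁)) * (1 - x₂) := by
      have h1 : x₃ * x₁ = x₃ * (a₁ * (1 - x₂) * (1 - x₃)) := by rw [← e₁]
      have h2 : x₁ * x₃ = x₁ * (a₃ * (1 - x₁) * (1 - x₂)) := by rw [← e₃]
      nlinarith [h1, h2]
    exact mul_right_cancel₀ h2ne h
  -- x₁ < 1 - x₂ and x₁ < 1 - x₃
  have hs2 : x₁ < 1 - x₂ := by
    calc x₁ = (a₁ * (1 - x₃)) * (1 - x₂) := by rw [e₁]; ring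
    _ < 1 * (1 - x₂) := by
        apply mul_lt_mul_of_pos_right _ h1x₂
        nlinarith
    _ = 1 - x₂ := by ring
  have hs3 : x₁ < 1 - x₃ := by
    calc x₁ = (a₁ * (1 - x₂)) * (1 - x₃) := e₁
    _ < 1 * (1 - x₃) := by
        apply mul_lt_mul_of_pos_right _ h1x₃
        nlinarith
    _ = 1 - x₃ := by ring
  -- x₂ < x₁ and x₃ < x₁, hence x₂, x₃ < 1/2
  have hp2 : x₂ * (1 - x₂) < x₁ * (1 - x₁) :=
    lt_of_mul_lt_mul_left (by nlinarith [key2, mul_pos hx₁ h1x₁]) (le_of_lt ha₁0)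
  have hp3 : x₃ * (1 - x₃) < x₁ * (1 - x₁) :=
    lt_of_mul_lt_mul_left (by nlinarith [key3, mul_pos hx₁ h1x₁]) (le_of_lt ha₁0)
  have hlt2 : x₂ < x₁ := by nlinarith [hp2, hs2]
  have hlt3 : x₃ < x₁ := by nlinarith [hp3, hs3]
  have hhalf2 : x₂ < 1/2 := by linarith
  have hhalf3 : x₃ < 1/2 := by linarith
  have hx : (1:ℝ)/4 - (1/2 - x₁)^2 = x₁ * (1 - x₁) := by ring
  have hr2 : (a₂/a₁) * (x₁ * (1 - x₁)) = x₂ * (1 - x₂) := by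
    field_simp
    linarith [key2]
  have hr3 : (a₃/a₁) * (x₁ * (1 - x₁)) = x₃ * (1 - x₃) := by
    field_simp
    linarith [key3]
  constructor
  · have hq : 1/4 - (a₂/a₁) * (1/4 - (1/2 - x₁)^2) = (1/2 - x₂)^2 := by
      linear_combination -hr2
    rw [hq, Real.sqrt_sq (show (0:ℝ) ≤ 1/2 - x₂ by linarith)]
    ring
  · have hq : 1/4 - (a₃/a₁) * (1/4 - (1/2 - x₁)^2) = (1/2 - x₃)^2 := by
      linear_combination -hr3
    rw [hq, Real.sqrt_sq (show (0:ℝ) ≤ 1/2 - x₃ by linarith)]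
    ring
end

section
/- Let a, a₁ be real numbers with 0 < a < a₁. Then for every real x with 0 ≤ x ≤ 1, one has 1 − (a(1/2 − x)²)/(a₁(1/4 − (a/a₁)(1/4 − (1/2 − x)²))) ≥ 1 − a/a₁ > 0. -/
theorem second_derivative_summand_bound
    (a a₁ : ℝ) (ha : 0 < a) (haa₁ : a < a₁) :
    ∀ x : ℝ, 0 ≤ x → x ≤ 1 →
      1 - (a * (1/2 - x)^2) / (a₁ * (1/4 - (a/a₁) * (1/4 - (1/2 - x)^2))) ≥ 1 - a/a₁ ∧
      (1 : ℝ) - a/a₁ > 0 := by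
  intro x hx0 hx1
  have ha₁ : 0 < a₁ := ha.trans haa₁
  constructor
  · have ht : (1/2 - x)^2 ≤ 1/4 := by nlinarith
    have ht0 : 0 ≤ (1/2 - x)^2 := sq_nonneg _
    have hD : a₁ * (1/4 - (a/a₁) * (1/4 - (1/2 - x)^2))
        = (a₁ - a)/4 + a * (1/2 - x)^2 := by
      field_simp
      ring
    rw [hD]
    have hDpos : 0 < (a₁ - a)/4 + a * (1/2 - x)^2 := by nlinarith
    have key : a * (1/2 - x)^2 / ((a₁ - a)/4 + a * (1/2 - x)^2) ≤ a/a₁ := by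
      rw [div_le_div_iff₀ hDpos ha₁]
      nlinarith [mul_nonneg (mul_nonneg ha.le (sub_nonneg.mpr haa₁.le)) (sub_nonneg.mpr ht)]
    linarith
  · have : a/a₁ < 1 := (div_lt_one ha₁).mpr haa₁
    linarith
end

section
/- Let a₁, a₂, a₃ be real numbers with 0 < a₃ < a₂ < a₁ < 1, and define f : ℝ → ℝ by f(x) = a₁·(1/2 + √(1/4 − (a₂/a₁)(1/4 − (1/2 − x)²)))·(1/2 + √(1/4 − (a₃/a₁)(1/4 − (1/2 − x)²))). Then f is strictly decreasing on [0, 1/2] and strictly increasing on [1/2, 1]; in particular f attains its minimum on [0,1] at x = 1/2. -/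
private lemma sqrt_key (c : ℝ) (hc0 : 0 < c) (hc1 : c < 1) {s t : ℝ}
    (hs : 0 ≤ s) (hst : s < t) :
    Real.sqrt (1/4 - c * (1/4 - s)) < Real.sqrt (1/4 - c * (1/4 - t)) := by
  apply Real.sqrt_lt_sqrt
  · nlinarith
  · nlinarith

private lemma prod_key (a₁ a₂ a₃ : ℝ)
    (ha₃ : 0 < a₃) (h₃₂ : a₃ < a₂) (h₂₁ : a₂ < a₁) (ha₁ : a₁ < 1)
    {s t : ℝ} (hs : 0 ≤ s) (hst : s < t) :
    a₁ * (1/2 + Real.sqrt (1/4 - (a₂/a₁) * (1/4 - s)))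
       * (1/2 + Real.sqrt (1/4 - (a₃/a₁) * (1/4 - s)))
    < a₁ * (1/2 + Real.sqrt (1/4 - (a₂/a₁) * (1/4 - t)))
       * (1/2 + Real.sqrt (1/4 - (a₃/a₁) * (1/4 - t))) := by
  have ha₁0 : (0:ℝ) < a₁ := by linarith
  have hc₂0 : 0 < a₂/a₁ := div_pos (by linarith) ha₁0
  have hc₂1 : a₂/a₁ < 1 := (div_lt_one ha₁0).mpr h₂₁
  have hc₃0 : 0 < a₃/a₁ := div_pos ha₃ ha₁0
  have hc₃1 : a₃/a₁ < 1 := (div_lt_one ha₁0).mpr (by linarith)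
  have h2 := sqrt_key (a₂/a₁) hc₂0 hc₂1 hs hst
  have h3 := sqrt_key (a₃/a₁) hc₃0 hc₃1 hs hst
  have n2 := Real.sqrt_nonneg (1/4 - (a₂/a₁) * (1/4 - s))
  have n3 := Real.sqrt_nonneg (1/4 - (a₃/a₁) * (1/4 - s))
  have h4 : (1/2 + Real.sqrt (1/4 - (a₂/a₁) * (1/4 - s)))
      * (1/2 + Real.sqrt (1/4 - (a₃/a₁) * (1/4 - s)))
      < (1/2 + Real.sqrt (1/4 - (a₂/a₁) * (1/4 - t)))
      * (1/2 + Real.sqrt (1/4 - (a₃/a₁) * (1/4 - t))) :=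
    mul_lt_mul' (by linarith) (by linarith) (by linarith) (by linarith)
  rw [mul_assoc, mul_assoc]
  exact mul_lt_mul_of_pos_left h4 ha₁0

theorem fixed_point_function_monotonicity
    (a₁ a₂ a₃ : ℝ)
    (ha₃ : 0 < a₃) (h₃₂ : a₃ < a₂) (h₂₁ : a₂ < a₁) (ha₁ : a₁ < 1)
    (f : ℝ → ℝ)
    (hf : ∀ x : ℝ, f x =
      a₁ * (1/2 + Real.sqrt (1/4 - (a₂/a₁) * (1/4 - (1/2 - x)^2)))
         * (1/2 + Real.sqrt (1/4 - (a₃/a₁) * (1/4 - (1/2 - x)^2)))) :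
    StrictAntiOn f (Set.Icc 0 (1/2)) ∧
    StrictMonoOn f (Set.Icc (1/2) 1) ∧
    ∀ x ∈ Set.Icc (0:ℝ) 1, f (1/2) ≤ f x := by
  refine ⟨?_, ?_, ?_⟩
  · intro x hx y hy hxy
    rw [hf x, hf y]
    apply prod_key a₁ a₂ a₃ ha₃ h₃₂ h₂₁ ha₁ (sq_nonneg _)
    have hx0 := hx.1; have hy2 := hy.2
    nlinarith
  · intro x hx y hy hxy
    rw [hf x, hf y]
    apply prod_key a₁ a₂ a₃ ha₃ h₃₂ h₂₁ ha₁ (sq_nonneg _)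
    have hx1 := hx.1; have hy2 := hy.2
    nlinarith
  · intro x hx
    rcases eq_or_ne x (1/2) with h | h
    · rw [h]
    · rw [hf x, hf (1/2)]
      apply le_of_lt
      have : (1/2 - (1/2:ℝ))^2 = 0 := by norm_num
      rw [this]
      apply prod_key a₁ a₂ a₃ ha₃ h₃₂ h₂₁ ha₁ le_rfl
      have hne : (1/2 - x) ≠ 0 := sub_ne_zero.mpr (Ne.symm h)
      exact lt_of_le_of_ne (sq_nonneg _) (Ne.symm (pow_ne_zero _ hne))
end

section
/- Let a₁, a₂, a₃ be real numbers with 0 < a₃ < a₂ < a₁ < 1, and define f : ℝ → ℝ by f(x) = a₁·(1/2 + √(1/4 − (a₂/a₁)(1/4 − (1/2 − x)²)))·(1/2 + √(1/4 − (a₃/a₁)(1/4 − (1/2 − x)²))). Then f is strictly convex on the interval [0, 1]. -/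
/-!
Put `u = x - 1/2` and `c = aᵢ/a₁ ∈ (0, 1)`: each radicand becomes `Pᵢ = (1 - c)/4 + c u²`, and
`f = a₁ (1/4 + √P₂/2 + √P₃/2 + √(P₂ P₃))`. The first two roots are convex, and `P₂ P₃` is an even
quartic with positive constant and quadratic coefficients, whose square root is strictly convex on
all of `ℝ` by the second-derivative test, since `2 F F'' - F'² > 0` for such a quartic `F`.
-/

open Set

theorem StrictConvexOn.smul {𝕜 E β : Type*} [CommSemiring 𝕜] [PartialOrder 𝕜] [AddCommMonoid E]
    [AddCommMonoid β] [PartialOrder β] [SMul 𝕜 E] [Module 𝕜 β] [PosSMulStrictMono 𝕜 β]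
    {s : Set E} {f : E → β} {c : 𝕜} (hc : 0 < c) (hf : StrictConvexOn 𝕜 s f) :
    StrictConvexOn 𝕜 s fun x => c • f x :=
  ⟨hf.1, fun x hx y hy hxy a b ha hb hab =>
    calc
      c • f (a • x + b • y) < c • (a • f x + b • f y) :=
        smul_lt_smul_of_pos_left (hf.2 hx hy hxy ha hb hab) hc
      _ = a • c • f x + b • c • f y := by rw [smul_add, smul_comm c, smul_comm c]⟩

-- `(√F)'' = (2 F F'' - F'²) / (4 F^{3/2})`
theorem strictConvexOn_univ_sqrt_of_sq_deriv_lt {F F' F'' : ℝ → ℝ}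
    (hF : ∀ x, HasDerivAt F (F' x) x) (hF' : ∀ x, HasDerivAt F' (F'' x) x)
    (hpos : ∀ x, 0 < F x) (hlt : ∀ x, F' x ^ 2 < 2 * F x * F'' x) :
    StrictConvexOn ℝ univ fun x => √(F x) := by
  have hsqrt : ∀ x, HasDerivAt (fun y => √(F y)) (F' x / (2 * √(F x))) x :=
    fun x => (hF x).sqrt (hpos x).ne'
  have hderiv : deriv (fun y => √(F y)) = fun x => F' x / (2 * √(F x)) :=
    funext fun x => (hsqrt x).deriv
  refine strictConvexOn_univ_of_deriv2_pos
    (continuous_iff_continuousAt.2 fun x => (hsqrt x).continuousAt) fun x => ?_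
  have hs : 0 < √(F x) := Real.sqrt_pos.2 (hpos x)
  have hsq : √(F x) ^ 2 = F x := Real.sq_sqrt (hpos x).le
  have h2 := (hF' x).fun_div ((hsqrt x).const_mul 2) (by positivity)
  rw [Function.iterate_succ_apply, Function.iterate_one, hderiv, h2.deriv]
  have key : 0 < 2 * F x * F'' x - F' x ^ 2 := sub_pos.2 (hlt x)
  apply div_pos _ (by positivity)
  field_simp
  rw [hsq]
  linarith

theorem strictConvexOn_univ_sqrt_even_quartic {α β γ : ℝ} (hα : 0 < α) (hβ : 0 < β)
    (hγ : 0 ≤ γ) : StrictConvexOn ℝ univ fun u => √(α + β * u ^ 2 + γ * u ^ 4) := by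
  refine strictConvexOn_univ_sqrt_of_sq_deriv_lt (F' := fun u => 2 * β * u + 4 * γ * u ^ 3)
    (F'' := fun u => 2 * β + 12 * γ * u ^ 2) (fun u => ?_) (fun u => ?_) (fun u => by positivity)
    (fun u => ?_)
  · refine ((((hasDerivAt_pow 2 u).const_mul β).const_add α).fun_add
      ((hasDerivAt_pow 4 u).const_mul γ)).congr_deriv ?_
    norm_num
    ring
  · refine (((hasDerivAt_id u).const_mul (2 * β)).fun_add
      ((hasDerivAt_pow 3 u).const_mul (4 * γ))).congr_deriv ?_
    norm_num
    ring
  · -- the difference is `4αβ + 24αγu² + 12βγu⁴ + 8γ²u⁶`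
    have : 0 ≤ 24 * α * γ * u ^ 2 + 12 * β * γ * u ^ 4 + 8 * γ ^ 2 * u ^ 6 := by positivity
    nlinarith [mul_pos hα hβ]

theorem strictConvexOn_univ_add_sqrt_mul_add_sqrt {p q α β γ δ : ℝ} (hp : 0 ≤ p) (hq : 0 ≤ q)
    (hα : 0 < α) (hβ : 0 < β) (hγ : 0 < γ) (hδ : 0 < δ) :
    StrictConvexOn ℝ univ fun u => (p + √(α + β * u ^ 2)) * (q + √(γ + δ * u ^ 2)) := by
  have sqrt_quadratic {a b : ℝ} (ha : 0 < a) (hb : 0 < b) :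
      ConvexOn ℝ univ fun u => √(a + b * u ^ 2) := by
    simpa using (strictConvexOn_univ_sqrt_even_quartic ha hb le_rfl).convexOn
  have hprod := strictConvexOn_univ_sqrt_even_quartic (mul_pos hα hγ)
    (by positivity : 0 < α * δ + β * γ) (by positivity : 0 ≤ β * δ)
  have hsum := ((((sqrt_quadratic hα hβ).smul hq).add
    ((sqrt_quadratic hγ hδ).smul hp)).add_strictConvexOn hprod).add_const (p * q)
  refine hsum.congr fun u _ => ?_
  simp only [Pi.add_apply, smul_eq_mul]
  have hmul : √(α + β * u ^ 2) * √(γ + δ * u ^ 2) =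
      √(α * γ + (α * δ + β * γ) * u ^ 2 + β * δ * u ^ 4) := by
    rw [← Real.sqrt_mul (by positivity)]
    ring_nf
  rw [← hmul]
  ring

theorem fixed_point_function_strict_convexity_general
    (a₁ a₂ a₃ : ℝ)
    (ha₃ : 0 < a₃) (h₃₂ : a₃ < a₂) (h₂₁ : a₂ < a₁)
    (f : ℝ → ℝ)
    (hf : ∀ x : ℝ, f x =
      a₁ * (1/2 + Real.sqrt (1/4 - (a₂/a₁) * (1/4 - (1/2 - x)^2)))
         * (1/2 + Real.sqrt (1/4 - (a₃/a₁) * (1/4 - (1/2 - x)^2)))) :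
    StrictConvexOn ℝ (Set.Icc 0 1) f := by
  have ha₂ : 0 < a₂ := ha₃.trans h₃₂
  have ha₁ : 0 < a₁ := ha₂.trans h₂₁
  have hc₂ : a₂ / a₁ < 1 := (div_lt_one ha₁).2 h₂₁
  have hc₃ : a₃ / a₁ < 1 := (div_lt_one ha₁).2 (h₃₂.trans h₂₁)
  have hg := strictConvexOn_univ_add_sqrt_mul_add_sqrt (p := 1/2) (q := 1/2)
    (α := (1 - a₂ / a₁) / 4) (β := a₂ / a₁) (γ := (1 - a₃ / a₁) / 4) (δ := a₃ / a₁)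
    (by norm_num) (by norm_num) (by linarith) (by positivity) (by linarith) (by positivity)
  refine (((hg.smul ha₁).translate_right (-1/2)).subset (subset_univ _) (convex_Icc 0 1)).congr
    fun x _ => ?_
  rw [hf, Function.comp_apply, smul_eq_mul]
  ring_nf

theorem fixed_point_function_strict_convexity
    (a₁ a₂ a₃ : ℝ)
    (ha₃ : 0 < a₃) (h₃₂ : a₃ < a₂) (h₂₁ : a₂ < a₁) (ha₁ : a₁ < 1)
    (f : ℝ → ℝ)
    (hf : ∀ x : ℝ, f x =
      a₁ * (1/2 + Real.sqrt (1/4 - (a₂/a₁) * (1/4 - (1/2 - x)^2)))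
         * (1/2 + Real.sqrt (1/4 - (a₃/a₁) * (1/4 - (1/2 - x)^2)))) :
    StrictConvexOn ℝ (Set.Icc 0 1) f :=
  fixed_point_function_strict_convexity_general a₁ a₂ a₃ ha₃ h₃₂ h₂₁ f hf
end

section
/- Let a₁, a₂, a₃ be real numbers with 0 < a₃ < a₂ < a₁ < 1, and define f : ℝ → ℝ by f(x) = a₁·(1/2 + √(1/4 − (a₂/a₁)(1/4 − (1/2 − x)²)))·(1/2 + √(1/4 − (a₃/a₁)(1/4 − (1/2 − x)²))). If (x₁, x₂, x₃) ∈ (0,1)³ satisfies x₁ = a₁(1 − x₂)(1 − x₃), x₂ = a₂(1 − x₁)(1 − x₃), x₃ = a₃(1 − x₁)(1 − x₂), then x₁ = f(x₁). -/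
theorem solution_is_fixed_point
    (a₁ a₂ a₃ : ℝ)
    (ha₃ : 0 < a₃) (h₃₂ : a₃ < a₂) (h₂₁ : a₂ < a₁) (ha₁ : a₁ < 1)
    (f : ℝ → ℝ)
    (hf : ∀ x : ℝ, f x =
      a₁ * (1/2 + Real.sqrt (1/4 - (a₂/a₁) * (1/4 - (1/2 - x)^2)))
         * (1/2 + Real.sqrt (1/4 - (a₃/a₁) * (1/4 - (1/2 - x)^2))))
    (x₁ x₂ x₃ : ℝ)
    (hx₁ : 0 < x₁) (hx₁' : x₁ < 1)
    (hx₂ : 0 < x₂) (hx₂' : x₂ < 1)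
    (hx₃ : 0 < x₃) (hx₃' : x₃ < 1)
    (e₁ : x₁ = a₁ * (1 - x₂) * (1 - x₃))
    (e₂ : x₂ = a₂ * (1 - x₁) * (1 - x₃))
    (e₃ : x₃ = a₃ * (1 - x₁) * (1 - x₂)) :
    x₁ = f x₁ := by
  have ha₁0 : (0:ℝ) < a₁ := lt_trans (lt_trans ha₃ h₃₂) h₂₁
  -- key product identities
  have k₂ : a₁ * (x₂ * (1 - x₂)) = a₂ * (x₁ * (1 - x₁)) := by
    linear_combination (a₁ * (1 - x₂)) * e₂ - (a₂ * (1 - x₁)) * e₁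
  have k₃ : a₁ * (x₃ * (1 - x₃)) = a₃ * (x₁ * (1 - x₁)) := by
    linear_combination (a₁ * (1 - x₃)) * e₃ - (a₃ * (1 - x₁)) * e₁
  -- ordering: x₂ ≤ x₁ and x₃ ≤ x₁
  have key₂ : (x₂ - x₁) * (1 - a₂ * (1 - x₃)) = -((1 - x₃) * (a₁ - a₂) * (1 - x₂)) := by
    linear_combination e₂ - e₁
  have key₃ : (x₃ - x₁) * (1 - a₃ * (1 - x₂)) = -((1 - x₂) * (a₁ - a₃) * (1 - x₃)) := by
    linear_combination e₃ - e₁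
  have h21 : x₂ ≤ x₁ := by
    nlinarith [key₂, mul_pos (mul_pos (sub_pos.mpr hx₃') (by linarith : (0:ℝ) < a₁ - a₂)) (sub_pos.mpr hx₂'), mul_pos (lt_trans ha₃ h₃₂) hx₃]
  have h31 : x₃ ≤ x₁ := by
    nlinarith [key₃, mul_pos (mul_pos (sub_pos.mpr hx₂') (by linarith : (0:ℝ) < a₁ - a₃)) (sub_pos.mpr hx₃'), mul_pos ha₃ hx₂]
  -- all at most 1/2
  have hhalf2 : x₂ ≤ 1/2 := by
    nlinarith [mul_pos (mul_pos ha₁0 (sub_pos.mpr hx₂')) hx₃, mul_pos (sub_pos.mpr ha₁) (sub_pos.mpr hx₂')]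
  have hhalf3 : x₃ ≤ 1/2 := by
    nlinarith [mul_pos (mul_pos ha₁0 (sub_pos.mpr hx₂')) hx₃, mul_pos (sub_pos.mpr ha₁) (sub_pos.mpr hx₂')]
  have hd₂ : a₂/a₁ * (1/4 - (1/2 - x₁)^2) = x₂ * (1 - x₂) := by
    rw [div_mul_eq_mul_div, div_eq_iff (ne_of_gt ha₁0)]
    linear_combination -k₂
  have hd₃ : a₃/a₁ * (1/4 - (1/2 - x₁)^2) = x₃ * (1 - x₃) := by
    rw [div_mul_eq_mul_div, div_eq_iff (ne_of_gt ha₁0)]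
    linear_combination -k₃
  have hs₂ : (1:ℝ)/4 - (a₂/a₁) * (1/4 - (1/2 - x₁)^2) = (1/2 - x₂)^2 := by
    rw [hd₂]; ring
  have hs₃ : (1:ℝ)/4 - (a₃/a₁) * (1/4 - (1/2 - x₁)^2) = (1/2 - x₃)^2 := by
    rw [hd₃]; ring
  rw [hf, hs₂, hs₃, Real.sqrt_sq (by linarith), Real.sqrt_sq (by linarith)]
  linear_combination e₁
end

section
/- Let a₁, a₂, a₃ be real numbers with 0 < a₃ < a₂ < a₁ < 1, and define f : ℝ → ℝ by f(x) = a₁·(1/2 + √(1/4 − (a₂/a₁)(1/4 − (1/2 − x)²)))·(1/2 + √(1/4 − (a₃/a₁)(1/4 − (1/2 − x)²))). If r ∈ (0,1) satisfies r = f(r), then the triple (x₁, x₂, x₃) = (r, 1/2 − √(1/4 − (a₂/a₁)(1/4 − (1/2 − r)²)), 1/2 − √(1/4 − (a₃/a₁)(1/4 − (1/2 − r)²))) lies in (0,1)³ and satisfies x₁ = a₁(1 − x₂)(1 − x₃), x₂ = a₂(1 − x₁)(1 − x₃), x₃ = a₃(1 − x₁)(1 − x₂). -/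
set_option maxHeartbeats 1000000


theorem fixed_point_gives_solution
    (a₁ a₂ a₃ : ℝ)
    (ha₃ : 0 < a₃) (h₃₂ : a₃ < a₂) (h₂₁ : a₂ < a₁) (ha₁ : a₁ < 1)
    (f : ℝ → ℝ)
    (hf : ∀ x : ℝ, f x =
      a₁ * (1/2 + Real.sqrt (1/4 - (a₂/a₁) * (1/4 - (1/2 - x)^2)))
         * (1/2 + Real.sqrt (1/4 - (a₃/a₁) * (1/4 - (1/2 - x)^2))))
    (r : ℝ) (hr : 0 < r) (hr' : r < 1) (hfix : r = f r) :
    let x₁ := r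
    let x₂ := 1/2 - Real.sqrt (1/4 - (a₂/a₁) * (1/4 - (1/2 - r)^2))
    let x₃ := 1/2 - Real.sqrt (1/4 - (a₃/a₁) * (1/4 - (1/2 - r)^2))
    (0 < x₁ ∧ x₁ < 1) ∧ (0 < x₂ ∧ x₂ < 1) ∧ (0 < x₃ ∧ x₃ < 1) ∧
    x₁ = a₁ * (1 - x₂) * (1 - x₃) ∧
    x₂ = a₂ * (1 - x₁) * (1 - x₃) ∧
    x₃ = a₃ * (1 - x₁) * (1 - x₂) := by
  have ha1 : 0 < a₁ := lt_trans (lt_trans ha₃ h₃₂) h₂₁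
  have ha1' : a₁ ≠ 0 := ne_of_gt ha1
  set t : ℝ := 1/4 - (1/2 - r)^2 with ht_def
  have ht : t = r * (1 - r) := by rw [ht_def]; ring
  have ht0 : 0 < t := by rw [ht]; nlinarith
  have ht4 : t ≤ 1/4 := by nlinarith [sq_nonneg (1/2 - r)]
  have hc2 : 0 < a₂ / a₁ := div_pos (lt_trans ha₃ h₃₂) ha1
  have hc2' : a₂ / a₁ < 1 := (div_lt_one ha1).2 h₂₁
  have hc3 : 0 < a₃ / a₁ := div_pos ha₃ ha1
  have hc3' : a₃ / a₁ < 1 := (div_lt_one ha1).2 (lt_trans h₃₂ h₂₁)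
  have hE2nn : 0 ≤ 1/4 - a₂ / a₁ * t := by nlinarith [mul_pos hc2 ht0]
  have hE2lt : 1/4 - a₂ / a₁ * t < 1/4 := by nlinarith [mul_pos hc2 ht0]
  have hE3nn : 0 ≤ 1/4 - a₃ / a₁ * t := by nlinarith [mul_pos hc3 ht0]
  have hE3lt : 1/4 - a₃ / a₁ * t < 1/4 := by nlinarith [mul_pos hc3 ht0]
  set s₂ : ℝ := Real.sqrt (1/4 - a₂ / a₁ * t) with hs2def
  set s₃ : ℝ := Real.sqrt (1/4 - a₃ / a₁ * t) with hs3def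
  have hs2sq : s₂ ^ 2 = 1/4 - a₂ / a₁ * t := Real.sq_sqrt hE2nn
  have hs3sq : s₃ ^ 2 = 1/4 - a₃ / a₁ * t := Real.sq_sqrt hE3nn
  have hs2nn : 0 ≤ s₂ := Real.sqrt_nonneg _
  have hs3nn : 0 ≤ s₃ := Real.sqrt_nonneg _
  have hs2half : s₂ < 1/2 := by
    have h : s₂ ^ 2 < (1/2 : ℝ) ^ 2 := by rw [hs2sq]; norm_num; linarith
    exact lt_of_pow_lt_pow_left₀ 2 (by norm_num) h
  have hs3half : s₃ < 1/2 := by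
    have h : s₃ ^ 2 < (1/2 : ℝ) ^ 2 := by rw [hs3sq]; norm_num; linarith
    exact lt_of_pow_lt_pow_left₀ 2 (by norm_num) h
  have hfr : r = a₁ * (1/2 + s₂) * (1/2 + s₃) := by rw [hfix, hf]
  have hs2sq' : a₁ * s₂ ^ 2 = a₁ * (1/4) - a₂ * t := by
    rw [hs2sq]; field_simp
  have hs3sq' : a₁ * s₃ ^ 2 = a₁ * (1/4) - a₃ * t := by
    rw [hs3sq]; field_simp
  have key2 : a₁ * ((1/2 - s₂) * (1/2 + s₂)) = a₂ * (r * (1 - r)) := by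
    rw [ht] at hs2sq'; linear_combination -hs2sq'
  have key3 : a₁ * ((1/2 - s₃) * (1/2 + s₃)) = a₃ * (r * (1 - r)) := by
    rw [ht] at hs3sq'; linear_combination -hs3sq'
  have hne2 : a₁ * (1/2 + s₂) ≠ 0 := ne_of_gt (mul_pos ha1 (by linarith))
  have hne3 : a₁ * (1/2 + s₃) ≠ 0 := ne_of_gt (mul_pos ha1 (by linarith))
  intro x₁ x₂ x₃
  refine ⟨⟨hr, hr'⟩, ⟨?_, ?_⟩, ⟨?_, ?_⟩, ?_, ?_, ?_⟩
  · show (0:ℝ) < 1/2 - s₂; linarith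
  · show (1/2 - s₂ : ℝ) < 1; linarith
  · show (0:ℝ) < 1/2 - s₃; linarith
  · show (1/2 - s₃ : ℝ) < 1; linarith
  · show r = a₁ * (1 - (1/2 - s₂)) * (1 - (1/2 - s₃))
    linear_combination hfr
  · show (1/2 - s₂ : ℝ) = a₂ * (1 - r) * (1 - (1/2 - s₃))
    refine mul_left_cancel₀ hne2 ?_
    linear_combination key2 + a₂ * (1 - r) * hfr
  · show (1/2 - s₃ : ℝ) = a₃ * (1 - r) * (1 - (1/2 - s₂))
    refine mul_left_cancel₀ hne3 ?_
    linear_combination key3 + a₃ * (1 - r) * hfr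
end

section
/- Let a₁, a₂, a₃ be real numbers with 0 < a₃ < a₂ < a₁ < 1, and define f : ℝ → ℝ by f(x) = a₁·(1/2 + √(1/4 − (a₂/a₁)(1/4 − (1/2 − x)²)))·(1/2 + √(1/4 − (a₃/a₁)(1/4 − (1/2 − x)²))). Then there exists r ∈ (0,1) with f(r) = r. -/
theorem fixed_point_exists
    (a₁ a₂ a₃ : ℝ)
    (ha₃ : 0 < a₃) (h₃₂ : a₃ < a₂) (h₂₁ : a₂ < a₁) (ha₁ : a₁ < 1)
    (f : ℝ → ℝ)
    (hf : ∀ x : ℝ, f x =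
      a₁ * (1/2 + Real.sqrt (1/4 - (a₂/a₁) * (1/4 - (1/2 - x)^2)))
         * (1/2 + Real.sqrt (1/4 - (a₃/a₁) * (1/4 - (1/2 - x)^2)))) :
    ∃ r : ℝ, 0 < r ∧ r < 1 ∧ f r = r := by
  have ha₁0 : 0 < a₁ := lt_trans (lt_trans ha₃ h₃₂) h₂₁
  have hcont : Continuous f := by
    have : f = fun x =>
      a₁ * (1/2 + Real.sqrt (1/4 - (a₂/a₁) * (1/4 - (1/2 - x)^2)))
         * (1/2 + Real.sqrt (1/4 - (a₃/a₁) * (1/4 - (1/2 - x)^2))) := funext hf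
    rw [this]; continuity
  have h4 : Real.sqrt 4 = 2 := by
    rw [show (4:ℝ) = 2^2 by norm_num, Real.sqrt_sq (by norm_num : (0:ℝ) ≤ 2)]
  have hf0 : f 0 = a₁ := by
    rw [hf]; norm_num [h4]
  have hf1 : f 1 = a₁ := by
    rw [hf]; norm_num [h4]
  set g : ℝ → ℝ := fun x => f x - x with hg
  have hgc : ContinuousOn g (Set.Icc (0:ℝ) 1) :=
    (hcont.sub continuous_id).continuousOn
  have h0 : (0:ℝ) ∈ Set.Ioo (g 1) (g 0) := by
    constructor <;> simp [hg, hf0, hf1] <;> linarith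
  have := intermediate_value_Ioo' (by norm_num : (0:ℝ) ≤ 1) hgc h0
  obtain ⟨r, hr, hgr⟩ := this
  exact ⟨r, hr.1, hr.2, by have : f r - r = 0 := hgr; linarith⟩
end

section
/- Let a₁, a₂, a₃ be real numbers with 0 < a₃ < a₂ < a₁ < 1, and define f : ℝ → ℝ by f(x) = a₁·(1/2 + √(1/4 − (a₂/a₁)(1/4 − (1/2 − x)²)))·(1/2 + √(1/4 − (a₃/a₁)(1/4 − (1/2 − x)²))). Then there is at most one r ∈ (0,1) with f(r) = r; together with existence, f has exactly one fixed point in (0,1). -/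
/-!
Writing `u = (1/2 - x)²`, each factor of `f` is `1/2 + √((1 - c)/4 + c (x - 1/2)²)` with
`0 < c < 1`, a strictly convex function of `x` bounded below by `1/2`; both factors are
increasing functions of `u`, so they vary together and their product is strictly convex.
For a strictly convex `f` with `f 1 < 1`, two fixed points `r < s < 1` would give secant
slopes `1` on `[r, s]` and `< 1` on `[s, 1]`, contradicting the increase of slopes.
Existence follows from the intermediate value theorem, since `f 0 = f 1 = a₁ ∈ (0, 1)`.
-/

open Set Function

theorem StrictConvexOn.const_mul {E : Type*} [AddCommGroup E] [Module ℝ E] {s : Set E}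
    {f : E → ℝ} {c : ℝ} (hc : 0 < c) (hf : StrictConvexOn ℝ s f) :
    StrictConvexOn ℝ s fun x ↦ c * f x := by
  refine ⟨hf.1, fun x hx y hy hxy a b ha hb hab ↦ ?_⟩
  have h := hf.2 hx hy hxy ha hb hab
  simp only [smul_eq_mul] at h ⊢
  calc c * f (a • x + b • y) < c * (a * f x + b * f y) := mul_lt_mul_of_pos_left h hc
    _ = a * (c * f x) + b * (c * f y) := by ring

/-- Splitting `f * g = f * (g - m) + m * f`, the first summand is convex by `ConvexOn.mul`. -/
theorem StrictConvexOn.mul_convexOn {E : Type*} [AddCommGroup E] [Module ℝ E] {s : Set E}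
    {f g : E → ℝ} {m : ℝ} (hf : StrictConvexOn ℝ s f) (hg : ConvexOn ℝ s g)
    (hf₀ : ∀ ⦃x⦄, x ∈ s → 0 ≤ f x) (hm : 0 < m) (hgm : ∀ ⦃x⦄, x ∈ s → m ≤ g x)
    (hfg : MonovaryOn f g s) : StrictConvexOn ℝ s (f * g) := by
  have hshift : ConvexOn ℝ s (f * fun x ↦ g x - m) :=
    hf.convexOn.mul (hg.sub (concaveOn_const m hg.1)) hf₀ (fun x hx ↦ sub_nonneg.2 (hgm hx))
      fun i hi j hj hij ↦ hfg hi hj (sub_lt_sub_iff_right m |>.1 hij)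
  refine (hshift.add_strictConvexOn (hf.const_mul hm)).congr fun x _ ↦ ?_
  simp only [Pi.mul_apply, Pi.add_apply]
  ring

theorem strictConvexOn_sqrt_add_mul_sq {α c : ℝ} (hα : 0 < α) (hc : 0 < c) :
    StrictConvexOn ℝ univ fun t ↦ √(α + c * t ^ 2) := by
  refine ⟨convex_univ, fun x _ y _ hxy a b ha hb hab ↦ ?_⟩
  simp only [smul_eq_mul]
  set A := √(α + c * x ^ 2)
  set B := √(α + c * y ^ 2)
  have hA2 : A ^ 2 = α + c * x ^ 2 := Real.sq_sqrt (by positivity)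
  have hB2 : B ^ 2 = α + c * y ^ 2 := Real.sq_sqrt (by positivity)
  have hA : 0 < A := Real.sqrt_pos.2 (by positivity)
  have hB : 0 < B := Real.sqrt_pos.2 (by positivity)
  -- strict Cauchy–Schwarz: `(A B)² - (α + c x y)² = α c (x - y)²`
  have hcs : α + c * x * y < A * B := by
    have hxy' : 0 < (x - y) ^ 2 := by positivity [sub_ne_zero.2 hxy]
    have hsq : (α + c * x * y) ^ 2 < (A * B) ^ 2 := by
      rw [mul_pow, hA2, hB2]
      nlinarith [mul_pos (mul_pos hα hc) hxy']
    exact (abs_lt_of_sq_lt_sq' hsq (by positivity)).2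
  rw [Real.sqrt_lt' (by positivity)]
  calc α + c * (a * x + b * y) ^ 2
      = a ^ 2 * (α + c * x ^ 2) + b ^ 2 * (α + c * y ^ 2) + 2 * a * b * (α + c * x * y) := by
        linear_combination (-(1 + a + b) * α) * hab
    _ < a ^ 2 * A ^ 2 + b ^ 2 * B ^ 2 + 2 * a * b * (A * B) := by
        rw [hA2, hB2]; gcongr
    _ = (a * A + b * B) ^ 2 := by ring

noncomputable def halfAddSqrt (c u : ℝ) : ℝ := 1 / 2 + √(1 / 4 - c * (1 / 4 - u))

theorem half_le_halfAddSqrt (c u : ℝ) : 1 / 2 ≤ halfAddSqrt c u :=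
  le_add_of_nonneg_right (Real.sqrt_nonneg _)

theorem halfAddSqrt_quarter (c : ℝ) : halfAddSqrt c (1 / 4) = 1 := by
  norm_num [halfAddSqrt, show (1 / 4 : ℝ) = (1 / 2) ^ 2 by norm_num]

theorem monotone_halfAddSqrt {c : ℝ} (hc : 0 ≤ c) : Monotone (halfAddSqrt c) := by
  intro u v huv
  unfold halfAddSqrt
  gcongr

@[fun_prop]
theorem continuous_halfAddSqrt (c : ℝ) : Continuous (halfAddSqrt c) := by
  unfold halfAddSqrt
  fun_prop

theorem strictConvexOn_halfAddSqrt_sq {c : ℝ} (hc₀ : 0 < c) (hc₁ : c < 1) :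
    StrictConvexOn ℝ univ fun x ↦ halfAddSqrt c ((1 / 2 - x) ^ 2) := by
  have h := ((strictConvexOn_sqrt_add_mul_sq (α := (1 - c) / 4) (by linarith) hc₀).translate_left
    (-(1 / 2))).add_const (1 / 2)
  rw [preimage_univ] at h
  refine h.congr fun x _ ↦ ?_
  simp only [halfAddSqrt, comp_apply, Pi.add_apply]
  ring_nf

/-- The slope of `f` is `1` on `[x, y]` but below `1` on `[y, b]`. -/
theorem StrictConvexOn.not_lt_of_isFixedPt {s : Set ℝ} {f : ℝ → ℝ} {b x y : ℝ}
    (hf : StrictConvexOn ℝ s f) (hb : b ∈ s) (hfb : f b < b) (hx : x ∈ s) (hyb : y ≤ b)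
    (hfx : IsFixedPt f x) (hfy : IsFixedPt f y) : ¬x < y := by
  intro hxy
  have hyb' : y < b := hyb.lt_of_ne fun h ↦ (h ▸ hfy).eq.not_lt hfb |>.elim
  have hslope := hf.slope_strict_mono_adjacent hx hb hxy hyb'
  rw [hfx.eq, hfy.eq, div_self (sub_pos.2 hxy).ne', one_lt_div (sub_pos.2 hyb')] at hslope
  linarith

theorem StrictConvexOn.eq_of_isFixedPt {s : Set ℝ} {f : ℝ → ℝ} {b x y : ℝ}
    (hf : StrictConvexOn ℝ s f) (hb : b ∈ s) (hfb : f b < b) (hx : x ∈ s) (hy : y ∈ s)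
    (hxb : x ≤ b) (hyb : y ≤ b) (hfx : IsFixedPt f x) (hfy : IsFixedPt f y) : x = y :=
  le_antisymm (not_lt.1 (hf.not_lt_of_isFixedPt hb hfb hy hxb hfy hfx))
    (not_lt.1 (hf.not_lt_of_isFixedPt hb hfb hx hyb hfx hfy))

theorem exists_isFixedPt_mem_Ioo {f : ℝ → ℝ} {a b : ℝ} (hab : a ≤ b)
    (hf : ContinuousOn f (Icc a b)) (ha : a < f a) (hb : f b < b) :
    ∃ x ∈ Ioo a b, IsFixedPt f x := by
  obtain ⟨x, hx, hx0⟩ := intermediate_value_Ioo' hab (hf.sub continuousOn_id)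
    (show (0 : ℝ) ∈ Ioo (f b - b) (f a - a) from ⟨by linarith, by linarith⟩)
  exact ⟨x, hx, sub_eq_zero.1 hx0⟩

theorem fixed_point_unique
    (a₁ a₂ a₃ : ℝ)
    (ha₃ : 0 < a₃) (h₃₂ : a₃ < a₂) (h₂₁ : a₂ < a₁) (ha₁ : a₁ < 1)
    (f : ℝ → ℝ)
    (hf : ∀ x : ℝ, f x =
      a₁ * (1/2 + Real.sqrt (1/4 - (a₂/a₁) * (1/4 - (1/2 - x)^2)))
         * (1/2 + Real.sqrt (1/4 - (a₃/a₁) * (1/4 - (1/2 - x)^2)))) :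
    (∀ r s : ℝ, 0 < r → r < 1 → 0 < s → s < 1 → f r = r → f s = s → r = s) ∧
    ∃! r : ℝ, 0 < r ∧ r < 1 ∧ f r = r := by
  have ha₁₀ : 0 < a₁ := by linarith
  have hc₂ : 0 < a₂ / a₁ ∧ a₂ / a₁ < 1 := ⟨by positivity [ha₃.trans h₃₂], (div_lt_one ha₁₀).2 h₂₁⟩
  have hc₃ : 0 < a₃ / a₁ ∧ a₃ / a₁ < 1 := ⟨by positivity, (div_lt_one ha₁₀).2 (by linarith)⟩
  have hf_eq : f = (fun x ↦ a₁ * halfAddSqrt (a₂ / a₁) ((1 / 2 - x) ^ 2)) *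
      fun x ↦ halfAddSqrt (a₃ / a₁) ((1 / 2 - x) ^ 2) := funext hf
  have hmono : Monovary (fun x ↦ a₁ * halfAddSqrt (a₂ / a₁) ((1 / 2 - x) ^ 2))
      fun x ↦ halfAddSqrt (a₃ / a₁) ((1 / 2 - x) ^ 2) :=
    (((monotone_halfAddSqrt hc₂.1.le).const_mul ha₁₀.le).monovary
      (monotone_halfAddSqrt hc₃.1.le)).comp_right fun x ↦ (1 / 2 - x) ^ 2
  have hconv : StrictConvexOn ℝ univ f := by
    rw [hf_eq]
    refine ((strictConvexOn_halfAddSqrt_sq hc₂.1 hc₂.2).const_mul ha₁₀).mul_convexOn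
      (strictConvexOn_halfAddSqrt_sq hc₃.1 hc₃.2).convexOn (fun x _ ↦ ?_) one_half_pos
      (fun x _ ↦ half_le_halfAddSqrt _ _) (hmono.monovaryOn univ)
    exact mul_nonneg ha₁₀.le (one_half_pos.le.trans (half_le_halfAddSqrt _ _))
  have hcont : Continuous f := by
    rw [hf_eq]
    fun_prop
  have hf₀ : f 0 = a₁ := by norm_num [hf_eq, halfAddSqrt_quarter]
  have hf₁ : f 1 = a₁ := by norm_num [hf_eq, halfAddSqrt_quarter]
  have huniq : ∀ r s : ℝ, 0 < r → r < 1 → 0 < s → s < 1 → f r = r → f s = s → r = s :=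
    fun r s _ hr₁ _ hs₁ hfr hfs ↦ hconv.eq_of_isFixedPt (mem_univ 1) (hf₁ ▸ ha₁) (mem_univ r)
      (mem_univ s) hr₁.le hs₁.le hfr hfs
  obtain ⟨r, hr, hfr⟩ := exists_isFixedPt_mem_Ioo zero_le_one hcont.continuousOn
    (hf₀ ▸ ha₁₀) (hf₁ ▸ ha₁)
  exact ⟨huniq, r, ⟨hr.1, hr.2, hfr⟩,
    fun s hs ↦ huniq s r hs.1 hs.2.1 hr.1 hr.2 hs.2.2 hfr⟩
end

section
/- Let α = (9 + √77)/20 and β = (9 − √77)/20. Then 0 < β < α < 1, and the quadruple (M(a), M(b), M(c), M(d)) = (α, β, α, β) satisfies M(a) = (10/11)(1 − (M(b) + M(d) − M(b)·M(d))), M(b) = (10/11)(1 − (M(a) + M(c) − M(a)·M(c))), M(c) = (10/11)(1 − (M(b) + M(d) − M(b)·M(d))), and M(d) = (10/11)(1 − (M(a) + M(c) − M(a)·M(c))). -/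
/-!
With `τ = (1 + ε)⁻¹` and `b + d - b d = 1 - (1 - b)(1 - d)`, the quadruple `(α, β, α, β)`
solves the four equations iff `α = τ (1 - β)²` and `β = τ (1 - α)²`. Both hold as soon as
`α + β = 1 - ε` and `α β = ε²`, i.e. when `α, β` are the two roots of
`x² - (1 - ε) x + ε²`; for `ε = 1/10` these are `(9 ± √77)/20`.
-/

theorem eq_inv_one_add_mul_of_add_eq_of_mul_eq {ε α β : ℝ} (hε : 1 + ε ≠ 0)
    (hsum : α + β = 1 - ε) (hprod : α * β = ε ^ 2) :
    α = (1 + ε)⁻¹ * (1 - (β + β - β * β)) := by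
  rw [eq_inv_mul_iff_mul_eq₀ hε]
  obtain rfl : β = 1 - ε - α := by linarith
  linear_combination hprod

theorem four_cycle_alternating_model :
    let α : ℝ := (9 + Real.sqrt 77) / 20
    let β : ℝ := (9 - Real.sqrt 77) / 20
    let Ma : ℝ := α
    let Mb : ℝ := β
    let Mc : ℝ := α
    let Md : ℝ := β
    (0 < β ∧ β < α ∧ α < 1) ∧
    Ma = (10/11) * (1 - (Mb + Md - Mb * Md)) ∧
    Mb = (10/11) * (1 - (Ma + Mc - Ma * Mc)) ∧
    Mc = (10/11) * (1 - (Mb + Md - Mb * Md)) ∧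
    Md = (10/11) * (1 - (Ma + Mc - Ma * Mc)) := by
  intro α β Ma Mb Mc Md
  have hsq : Real.sqrt 77 ^ 2 = 77 := Real.sq_sqrt (by norm_num)
  have h0 : 0 < Real.sqrt 77 := by positivity
  have h9 : Real.sqrt 77 < 9 := (Real.sqrt_lt' (by norm_num)).mpr (by norm_num)
  have hsum : α + β = 1 - 1 / 10 := by simp only [α, β]; ring
  have hprod : α * β = (1 / 10) ^ 2 := by
    simp only [α, β]
    linear_combination (-1 / 400 : ℝ) * hsq
  have hε : (1 : ℝ) + 1 / 10 ≠ 0 := by norm_num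
  have hα := eq_inv_one_add_mul_of_add_eq_of_mul_eq hε hsum hprod
  have hβ := eq_inv_one_add_mul_of_add_eq_of_mul_eq hε
    (by rw [add_comm, hsum]) (by rw [mul_comm, hprod])
  norm_num only at hα hβ
  have hbounds : 0 < β ∧ β < α ∧ α < 1 := by
    simp only [α, β]
    exact ⟨by linarith, by linarith, by linarith⟩
  exact ⟨hbounds, hα, hβ, hα, hβ⟩
end

section
/- There exist at least three pairwise distinct quadruples (w, x, y, z) ∈ (0,1)⁴ satisfying the system w = (10/11)(1 − (x + z − x·z)), x = (10/11)(1 − (w + y − w·y)), y = (10/11)(1 − (x + z − x·z)), z = (10/11)(1 − (w + y − w·y)). In particular, this system does not have a unique solution in (0,1)⁴. -/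
noncomputable def sVal : ℝ := (31 - Real.sqrt 561) / 20
noncomputable def aVal : ℝ := (9 + Real.sqrt 77) / 20
noncomputable def bVal : ℝ := (9 - Real.sqrt 77) / 20

lemma sq561 : Real.sqrt 561 ^ 2 = 561 := Real.sq_sqrt (by norm_num)
lemma sq77 : Real.sqrt 77 ^ 2 = 77 := Real.sq_sqrt (by norm_num)

lemma r561_lb : (23:ℝ) < Real.sqrt 561 := by
  have := Real.lt_sqrt (x := 23) (y := 561) (by norm_num)
  rw [this]; norm_num

lemma r561_ub : Real.sqrt 561 < 24 := by
  have := Real.sqrt_lt' (x := 561) (y := 24) (by norm_num)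
  rw [this]; norm_num

lemma r77_lb : (8:ℝ) < Real.sqrt 77 := by
  have := Real.lt_sqrt (x := 8) (y := 77) (by norm_num)
  rw [this]; norm_num

lemma r77_ub : Real.sqrt 77 < 9 := by
  have := Real.sqrt_lt' (x := 77) (y := 9) (by norm_num)
  rw [this]; norm_num

lemma sVal_pos : 0 < sVal := by
  have := r561_ub; unfold sVal; linarith
lemma sVal_lt : sVal < 1 := by
  have := r561_lb; unfold sVal; linarith
lemma aVal_pos : 0 < aVal := by
  have := r77_lb; unfold aVal; linarith
lemma aVal_lt : aVal < 1 := by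
  have := r77_ub; unfold aVal; linarith
lemma bVal_pos : 0 < bVal := by
  have := r77_ub; unfold bVal; linarith
lemma bVal_lt : bVal < 1 := by
  have := r77_lb; unfold bVal; linarith

lemma sEq : sVal = (10/11) * (1 - (sVal + sVal - sVal * sVal)) := by
  have h := sq561
  unfold sVal
  nlinarith [h]

lemma aEq : aVal = (10/11) * (1 - (bVal + bVal - bVal * bVal)) := by
  have h := sq77
  unfold aVal bVal
  nlinarith [h]

lemma bEq : bVal = (10/11) * (1 - (aVal + aVal - aVal * aVal)) := by
  have h := sq77
  unfold aVal bVal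
  nlinarith [h]

lemma s_ne_a : sVal ≠ aVal := by
  have h1 := r561_lb; have h2 := r77_lb
  unfold sVal aVal; intro h; nlinarith

lemma s_ne_b : sVal ≠ bVal := by
  have h1 := r561_ub; have h2 := r77_lb
  unfold sVal bVal; intro h; nlinarith

lemma a_ne_b : aVal ≠ bVal := by
  have h2 := r77_lb
  unfold aVal bVal; intro h; nlinarith

theorem four_cycle_three_models :
    ∃ p q u : ℝ × ℝ × ℝ × ℝ,
      p ≠ q ∧ p ≠ u ∧ q ≠ u ∧
      (∀ v ∈ ({p, q, u} : Set (ℝ × ℝ × ℝ × ℝ)),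
        (0 < v.1 ∧ v.1 < 1) ∧ (0 < v.2.1 ∧ v.2.1 < 1) ∧
        (0 < v.2.2.1 ∧ v.2.2.1 < 1) ∧ (0 < v.2.2.2 ∧ v.2.2.2 < 1) ∧
        v.1 = (10/11) * (1 - (v.2.1 + v.2.2.2 - v.2.1 * v.2.2.2)) ∧
        v.2.1 = (10/11) * (1 - (v.1 + v.2.2.1 - v.1 * v.2.2.1)) ∧
        v.2.2.1 = (10/11) * (1 - (v.2.1 + v.2.2.2 - v.2.1 * v.2.2.2)) ∧
        v.2.2.2 = (10/11) * (1 - (v.1 + v.2.2.1 - v.1 * v.2.2.1))) ∧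
      ¬ (∃! v : ℝ × ℝ × ℝ × ℝ,
        (0 < v.1 ∧ v.1 < 1) ∧ (0 < v.2.1 ∧ v.2.1 < 1) ∧
        (0 < v.2.2.1 ∧ v.2.2.1 < 1) ∧ (0 < v.2.2.2 ∧ v.2.2.2 < 1) ∧
        v.1 = (10/11) * (1 - (v.2.1 + v.2.2.2 - v.2.1 * v.2.2.2)) ∧
        v.2.1 = (10/11) * (1 - (v.1 + v.2.2.1 - v.1 * v.2.2.1)) ∧
        v.2.2.1 = (10/11) * (1 - (v.2.1 + v.2.2.2 - v.2.1 * v.2.2.2)) ∧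
        v.2.2.2 = (10/11) * (1 - (v.1 + v.2.2.1 - v.1 * v.2.2.1))) := by
  refine ⟨(sVal, sVal, sVal, sVal), (aVal, bVal, aVal, bVal), (bVal, aVal, bVal, aVal),
    ?_, ?_, ?_, ?_, ?_⟩
  · simp [Prod.ext_iff]; intro h; exact absurd h s_ne_a
  · simp [Prod.ext_iff]; intro h; exact absurd h s_ne_b
  · simp [Prod.ext_iff]; intro h; exact absurd h a_ne_b
  · intro v hv
    rcases hv with h | h | h <;> subst h <;>
      exact ⟨⟨by first | exact sVal_pos | exact aVal_pos | exact bVal_pos,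
              by first | exact sVal_lt | exact aVal_lt | exact bVal_lt⟩,
             ⟨by first | exact sVal_pos | exact aVal_pos | exact bVal_pos,
              by first | exact sVal_lt | exact aVal_lt | exact bVal_lt⟩,
             ⟨by first | exact sVal_pos | exact aVal_pos | exact bVal_pos,
              by first | exact sVal_lt | exact aVal_lt | exact bVal_lt⟩,
             ⟨by first | exact sVal_pos | exact aVal_pos | exact bVal_pos,
              by first | exact sVal_lt | exact aVal_lt | exact bVal_lt⟩,
             by first | exact sEq | exact aEq | exact bEq,
             by first | exact sEq | exact aEq | exact bEq,
             by first | exact sEq | exact aEq | exact bEq,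
             by first | exact sEq | exact aEq | exact bEq⟩
  · rintro ⟨v, -, huniq⟩
    have h1 := huniq (sVal, sVal, sVal, sVal)
      ⟨⟨sVal_pos, sVal_lt⟩, ⟨sVal_pos, sVal_lt⟩, ⟨sVal_pos, sVal_lt⟩, ⟨sVal_pos, sVal_lt⟩,
        sEq, sEq, sEq, sEq⟩
    have h2 := huniq (aVal, bVal, aVal, bVal)
      ⟨⟨aVal_pos, aVal_lt⟩, ⟨bVal_pos, bVal_lt⟩, ⟨aVal_pos, aVal_lt⟩, ⟨bVal_pos, bVal_lt⟩,
        aEq, bEq, aEq, bEq⟩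
    rw [← h2] at h1
    exact s_ne_a (congrArg Prod.fst h1)
end
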